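/- arXiv:2507.21818 — 2 statements merged into one kernel-verified Lean document; each statement's English description precedes it below -/
import Mathlib

section
/- For any $\sigma > 0$ and $\theta \in [0, 2\pi)$, the norm of the Brownian shift $B_{\sigma, e^{i\theta}}$ restricted to a nonzero Type I invariant subspace $\varphi H^2(\mathbb{T}) \oplus \{0\}$ (with $\varphi$ inner) equals $1$, whereas for any nonzero element $(g, y)$ of $\mathcal{G}_\Phi$ (which necessarily has $y \ne 0$), one has $\|B_{\sigma, e^{i\theta}}(g, y)\|^2 = \|(g, y)\|^2 + \sigma^2\|y\|^2 > \|(g, y)\|^2$. Consequently, the restriction of a Brownian shift to a Type I invariant subspace is never unitarily equivalent to the restriction of a Brownian shift to a Type II invariant subspace. -/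
open Complex

noncomputable section
set_option linter.unusedSectionVars false

/-- The `E`-valued Hardy space `H²_E(𝕋)`, modeled by the ℓ² space of its
Taylor/Fourier coefficient sequences. -/
abbrev Hardy (E : Type*) [NormedAddCommGroup E] [InnerProductSpace ℂ E] [CompleteSpace E] :=
  lp (fun _ : ℕ => E) 2

variable {E : Type*} [NormedAddCommGroup E] [InnerProductSpace ℂ E] [CompleteSpace E]

def shiftSeq (f : ℕ → E) : ℕ → E
  | 0 => 0
  | n + 1 => f n

lemma memℓp_shiftSeq {f : ℕ → E} (hf : Memℓp f 2) : Memℓp (shiftSeq f) 2 := by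
  have h := hf.summable (by norm_num)
  exact memℓp_gen ((summable_nat_add_iff 1).mp (by simpa [shiftSeq] using h))

/-- The shift `S_E : f ↦ z f` on `H²_E(𝕋)`. -/
def shiftOp (f : Hardy E) : Hardy E := ⟨shiftSeq f, memℓp_shiftSeq (lp.memℓp f)⟩

/-- The inclusion `i_E : E → H²_E(𝕋)` sending `x` to the constant function `x`. -/
def inclOp (y : E) : Hardy E := lp.single 2 (0 : ℕ) y

/-- The Brownian shift `B^E_{σ, e^{iθ}}` of covariance `σ` and angle `θ` on
`H²_E(𝕋) ⊕ E`: `(f, y) ↦ (zf + σ y, e^{iθ} y)`. -/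
def BS (σ θ : ℝ) (v : Hardy E × E) : Hardy E × E :=
  (shiftOp v.1 + (σ : ℂ) • inclOp v.2, Complex.exp (θ * I) • v.2)

/-- The Hilbert space direct sum `H²_E(𝕋) ⊕ E` (with the ℓ²-norm on the pair). -/
abbrev HardyPair (E : Type*) [NormedAddCommGroup E] [InnerProductSpace ℂ E] [CompleteSpace E] :=
  WithLp 2 (Hardy E × E)

/-- Build an element of `H²_E(𝕋) ⊕ E` from its two components. -/
def mkPair (f : Hardy E) (y : E) : HardyPair E := (WithLp.equiv 2 (Hardy E × E)).symm (f, y)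

/-- First component of an element of `H²_E(𝕋) ⊕ E`. -/
def pr1 (v : HardyPair E) : Hardy E := (WithLp.equiv 2 (Hardy E × E) v).1

/-- Second component of an element of `H²_E(𝕋) ⊕ E`. -/
def pr2 (v : HardyPair E) : E := (WithLp.equiv 2 (Hardy E × E) v).2

/-- The Brownian shift `B^E_{σ, e^{iθ}}` on the Hilbert space `H²_E(𝕋) ⊕ E`:
`(f, y) ↦ (zf + σy, e^{iθ} y)`. -/
def BW (σ θ : ℝ) (v : HardyPair E) : HardyPair E :=
  mkPair (shiftOp (pr1 v) + (σ : ℂ) • inclOp (pr2 v)) (Complex.exp (θ * I) • pr2 v)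

/-! Since `z f` is orthogonal to the constants, `‖B(f, y)‖² = ‖(f, y)‖² + σ²‖y‖²` for every
`(f, y)`. So the Brownian shift is isometric on a Type I subspace but not on a vector with
`y ≠ 0`, which a Type II subspace contains; a unitary equivalence intertwining the two
restrictions would transport the isometry property from the first to the second. -/

lemma inner_shiftOp_shiftOp (f g : Hardy E) :
    inner ℂ (shiftOp f) (shiftOp g) = inner ℂ f g := by
  rw [lp.inner_eq_tsum, lp.inner_eq_tsum,
    (lp.summable_inner (𝕜 := ℂ) (shiftOp f) (shiftOp g)).tsum_eq_zero_add]
  have h0 : shiftOp f 0 = 0 := rfl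
  rw [h0, inner_zero_left, zero_add]
  rfl

lemma norm_shiftOp (f : Hardy E) : ‖shiftOp f‖ = ‖f‖ := by
  rw [norm_eq_sqrt_re_inner (𝕜 := ℂ), norm_eq_sqrt_re_inner (𝕜 := ℂ), inner_shiftOp_shiftOp]

lemma inner_shiftOp_inclOp (f : Hardy E) (y : E) : inner ℂ (shiftOp f) (inclOp y) = 0 := by
  rw [inclOp, lp.inner_single_right]
  simp [shiftOp, shiftSeq]

lemma norm_inclOp (y : E) : ‖(inclOp y : Hardy E)‖ = ‖y‖ :=
  lp.norm_single (E := fun _ : ℕ => E) (p := 2) (by norm_num) 0 y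

lemma norm_shiftOp_add_smul_inclOp_sq (σ : ℝ) (f : Hardy E) (y : E) :
    ‖shiftOp f + (σ : ℂ) • inclOp y‖ ^ 2 = ‖f‖ ^ 2 + σ ^ 2 * ‖y‖ ^ 2 := by
  have horth : inner ℂ (shiftOp f) ((σ : ℂ) • inclOp y) = 0 := by
    rw [inner_smul_right, inner_shiftOp_inclOp, mul_zero]
  rw [sq, norm_add_sq_eq_norm_sq_add_norm_sq_of_inner_eq_zero _ _ horth, norm_shiftOp,
    norm_smul, norm_inclOp, Complex.norm_real, Real.norm_eq_abs, mul_mul_mul_comm,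
    abs_mul_abs_self]
  ring

lemma norm_sq_eq_norm_pr1_sq_add_norm_pr2_sq (v : HardyPair E) :
    ‖v‖ ^ 2 = ‖pr1 v‖ ^ 2 + ‖pr2 v‖ ^ 2 :=
  WithLp.prod_norm_sq_eq_of_L2 v

lemma norm_BW_sq (σ θ : ℝ) (v : HardyPair E) :
    ‖BW σ θ v‖ ^ 2 = ‖v‖ ^ 2 + σ ^ 2 * ‖pr2 v‖ ^ 2 := by
  rw [norm_sq_eq_norm_pr1_sq_add_norm_pr2_sq (BW σ θ v), norm_sq_eq_norm_pr1_sq_add_norm_pr2_sq v]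
  have hpr1 : pr1 (BW σ θ v) = shiftOp (pr1 v) + (σ : ℂ) • inclOp (pr2 v) := rfl
  have hpr2 : pr2 (BW σ θ v) = Complex.exp (θ * I) • pr2 v := rfl
  rw [hpr1, hpr2, norm_shiftOp_add_smul_inclOp_sq, norm_smul, Complex.norm_exp_ofReal_mul_I,
    one_mul]
  ring

lemma norm_BW_of_pr2_eq_zero (σ θ : ℝ) {v : HardyPair E} (hv : pr2 v = 0) :
    ‖BW σ θ v‖ = ‖v‖ := by
  have hsq := norm_BW_sq σ θ v
  rw [hv, norm_zero, zero_pow two_ne_zero, mul_zero, add_zero] at hsq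
  exact (pow_left_inj₀ (norm_nonneg _) (norm_nonneg _) two_ne_zero).mp hsq

lemma norm_BW_ne_of_pr2_ne_zero {σ : ℝ} (θ : ℝ) (hσ : σ ≠ 0) {v : HardyPair E} (hv : pr2 v ≠ 0) :
    ‖BW σ θ v‖ ≠ ‖v‖ := by
  intro heq
  have hsq := norm_BW_sq σ θ v
  rw [heq, left_eq_add] at hsq
  exact mul_ne_zero (pow_ne_zero 2 hσ) (pow_ne_zero 2 (norm_ne_zero_iff.mpr hv)) hsq

lemma LinearIsometryEquiv.norm_apply_eq_norm_of_intertwines {𝕜 F₁ F₂ : Type*} [RCLike 𝕜]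
    [SeminormedAddCommGroup F₁] [NormedSpace 𝕜 F₁] [SeminormedAddCommGroup F₂] [NormedSpace 𝕜 F₂]
    {M₁ : Submodule 𝕜 F₁} {M₂ : Submodule 𝕜 F₂} {A : F₁ → F₁} {B : F₂ → F₂}
    (hA : ∀ v ∈ M₁, A v ∈ M₁) (U : M₁ ≃ₗᵢ[𝕜] M₂)
    (hU : ∀ (v : F₁) (hv : v ∈ M₁), (U ⟨A v, hA v hv⟩ : F₂) = B (U ⟨v, hv⟩))
    (hAnorm : ∀ v ∈ M₁, ‖A v‖ = ‖v‖) {w : F₂} (hw : w ∈ M₂) :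
    ‖B w‖ = ‖w‖ := by
  obtain ⟨⟨v, hv⟩, hUv⟩ := U.surjective ⟨w, hw⟩
  have hBw : B w = U ⟨A v, hA v hv⟩ := by rw [hU v hv, hUv]
  calc ‖B w‖ = ‖U ⟨A v, hA v hv⟩‖ := by rw [hBw]; rfl
    _ = ‖v‖ := by rw [U.norm_map]; exact hAnorm v hv
    _ = ‖U ⟨v, hv⟩‖ := by rw [U.norm_map]; rfl
    _ = ‖w‖ := by rw [hUv]; rfl

theorem typeI_not_equivalent_typeII_general
    (σ₁ σ₂ θ₁ θ₂ : ℝ) (hσ₂ : 0 < σ₂) :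
    (∀ M₁ : Submodule ℂ (HardyPair ℂ), IsClosed (M₁ : Set (HardyPair ℂ)) →
      (∀ v ∈ M₁, BW σ₁ θ₁ v ∈ M₁) → (∀ v ∈ M₁, pr2 v = 0) →
      ∀ v ∈ M₁, ‖BW σ₁ θ₁ v‖ = ‖v‖) ∧
    (∀ T : Hardy ℂ →L[ℂ] Hardy ℂ, (∀ h : Hardy ℂ, ‖T h‖ = ‖h‖) →
      (∀ h : Hardy ℂ, T (shiftOp h) = shiftOp (T h)) →
      ∀ (g : Hardy ℂ) (y x : ℂ),
        shiftOp g + (σ₂ : ℂ) • inclOp y = Complex.exp (θ₂ * I) • g + T (inclOp x) →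
        ¬(g = 0 ∧ y = 0) →
        ‖BW σ₂ θ₂ (mkPair g y)‖ ^ 2 = ‖mkPair g y‖ ^ 2 + σ₂ ^ 2 * ‖y‖ ^ 2) ∧
    (∀ M₁ M₂ : Submodule ℂ (HardyPair ℂ),
      IsClosed (M₁ : Set (HardyPair ℂ)) → IsClosed (M₂ : Set (HardyPair ℂ)) →
      M₁ ≠ ⊥ →
      ∀ h₁ : ∀ v ∈ M₁, BW σ₁ θ₁ v ∈ M₁,
      (∀ v ∈ M₁, pr2 v = 0) →
      (∀ v ∈ M₂, BW σ₂ θ₂ v ∈ M₂) →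
      (∃ v ∈ M₂, pr2 v ≠ 0) →
      ¬ ∃ U : M₁ ≃ₗᵢ[ℂ] M₂,
        ∀ (v : HardyPair ℂ) (hv : v ∈ M₁),
          ((U ⟨BW σ₁ θ₁ v, h₁ v hv⟩ : M₂) : HardyPair ℂ) =
            BW σ₂ θ₂ ((U ⟨v, hv⟩ : M₂) : HardyPair ℂ)) := by
  refine ⟨fun M₁ _ _ htypeI v hv => norm_BW_of_pr2_eq_zero σ₁ θ₁ (htypeI v hv),
    fun _ _ _ g y _ _ _ => norm_BW_sq σ₂ θ₂ (mkPair g y), ?_⟩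
  rintro M₁ M₂ - - - h₁ htypeI - ⟨w, hw, hw2⟩ ⟨U, hU⟩
  have hiso : ‖BW σ₂ θ₂ w‖ = ‖w‖ :=
    U.norm_apply_eq_norm_of_intertwines h₁ hU
      (fun v hv => norm_BW_of_pr2_eq_zero σ₁ θ₁ (htypeI v hv)) hw
  exact norm_BW_ne_of_pr2_ne_zero θ₂ hσ₂.ne' hw2 hiso

/-- The restriction of a Brownian shift to a nonzero Type I invariant subspace is an
isometry (hence has norm 1), while on nonzero vectors of `𝒢_Ψ` the Brownian shift strictly
increases the norm: `‖B(g,y)‖² = ‖(g,y)‖² + σ²‖y‖²`. Consequently the restriction of a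
Brownian shift to a Type I invariant subspace is never unitarily equivalent to the
restriction of a Brownian shift to a Type II invariant subspace. -/
theorem typeI_not_equivalent_typeII
    (σ₁ σ₂ θ₁ θ₂ : ℝ) (hσ₁ : 0 < σ₁) (hσ₂ : 0 < σ₂)
    (hθ₁ : θ₁ ∈ Set.Ico 0 (2 * Real.pi)) (hθ₂ : θ₂ ∈ Set.Ico 0 (2 * Real.pi)) :
    (∀ M₁ : Submodule ℂ (HardyPair ℂ), IsClosed (M₁ : Set (HardyPair ℂ)) →
      (∀ v ∈ M₁, BW σ₁ θ₁ v ∈ M₁) → (∀ v ∈ M₁, pr2 v = 0) →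
      ∀ v ∈ M₁, ‖BW σ₁ θ₁ v‖ = ‖v‖) ∧
    (∀ T : Hardy ℂ →L[ℂ] Hardy ℂ, (∀ h : Hardy ℂ, ‖T h‖ = ‖h‖) →
      (∀ h : Hardy ℂ, T (shiftOp h) = shiftOp (T h)) →
      ∀ (g : Hardy ℂ) (y x : ℂ),
        shiftOp g + (σ₂ : ℂ) • inclOp y = Complex.exp (θ₂ * I) • g + T (inclOp x) →
        ¬(g = 0 ∧ y = 0) →
        ‖BW σ₂ θ₂ (mkPair g y)‖ ^ 2 = ‖mkPair g y‖ ^ 2 + σ₂ ^ 2 * ‖y‖ ^ 2) ∧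
    (∀ M₁ M₂ : Submodule ℂ (HardyPair ℂ),
      IsClosed (M₁ : Set (HardyPair ℂ)) → IsClosed (M₂ : Set (HardyPair ℂ)) →
      M₁ ≠ ⊥ →
      ∀ h₁ : ∀ v ∈ M₁, BW σ₁ θ₁ v ∈ M₁,
      (∀ v ∈ M₁, pr2 v = 0) →
      (∀ v ∈ M₂, BW σ₂ θ₂ v ∈ M₂) →
      (∃ v ∈ M₂, pr2 v ≠ 0) →
      ¬ ∃ U : M₁ ≃ₗᵢ[ℂ] M₂,
        ∀ (v : HardyPair ℂ) (hv : v ∈ M₁),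
          ((U ⟨BW σ₁ θ₁ v, h₁ v hv⟩ : M₂) : HardyPair ℂ) =
            BW σ₂ θ₂ ((U ⟨v, hv⟩ : M₂) : HardyPair ℂ)) :=
  typeI_not_equivalent_typeII_general σ₁ σ₂ θ₁ θ₂ hσ₂
end
end

section
/- Let $E$ be a Hilbert space, $\sigma > 0$, $\theta \in [0, 2\pi)$. A closed subspace $\mathcal{M}$ of $H^2_E(\mathbb{T}) \oplus E$ is reducing for the Brownian shift $B^E_{\sigma, e^{i\theta}}$ if and only if there exists a closed subspace $G \subseteq E$ such that $\mathcal{M} = H^2_G(\mathbb{T}) \oplus G$. -/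
open Complex

noncomputable section
set_option linter.unusedSectionVars false

variable {E : Type*} [NormedAddCommGroup E] [InnerProductSpace ℂ E] [CompleteSpace E]

lemma memℓp_tailSeq {f : ℕ → E} (hf : Memℓp f 2) : Memℓp (fun n => f (n + 1)) 2 := by
  have h := hf.summable (by norm_num)
  exact memℓp_gen ((summable_nat_add_iff 1).2 h)

/-- The backward shift `S_E^* : f ↦ (f - f(0))/z` on `H²_E(𝕋)`. -/
def tailOp (f : Hardy E) : Hardy E := ⟨fun n => f (n + 1), memℓp_tailSeq (lp.memℓp f)⟩

/-- The adjoint of the Brownian shift: `(f, y) ↦ (S_E^* f, σ f̂(0) + e^{-iθ} y)`. -/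
def BSadj (σ θ : ℝ) (v : Hardy E × E) : Hardy E × E :=
  (tailOp v.1, (σ : ℂ) • (v.1 : ℕ → E) 0 + Complex.exp (-(θ * I)) • v.2)

/-! Since `B*B (f, y) = (f, (1 + σ²) y)` and `σ ≠ 0`, a reducing subspace `M` contains `(0, y)`
whenever it contains `(f, y)`, so `M = F ⊕ G` with `F = {f | (f, 0) ∈ M}` and `G = {y | (0, y) ∈ M}`.
Applying `B*` to `(f, 0)` gives `(S* f, σ f(0))`, so every coefficient of `f ∈ F` lies in `G`;
applying `B` to `(0, y)` and then powers of `S` puts every monomial `zⁿ y` with `y ∈ G` into `F`,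
and closedness of `M` gives `H²_G ⊆ F`. -/

theorem lp.mem_of_forall_single_mem {α : Type*} [DecidableEq α] {E : α → Type*}
    [∀ i, NormedAddCommGroup (E i)] {p : ENNReal} [Fact (1 ≤ p)] (hp : p ≠ ⊤)
    {S : Type*} [SetLike S (lp E p)] [AddSubmonoidClass S (lp E p)] {s : S}
    (hs : IsClosed (s : Set (lp E p))) {f : lp E p} (hf : ∀ i, lp.single p i (f i) ∈ s) :
    f ∈ s :=
  hs.mem_of_tendsto (lp.hasSum_single hp f)
    (Filter.Eventually.of_forall fun _ => sum_mem fun i _ => hf i)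

/-- The paper's `H²_G(𝕋)`. -/
def hardySubmodule (G : Submodule ℂ E) : Submodule ℂ (Hardy E) where
  carrier := {f | ∀ n, f n ∈ G}
  add_mem' hf hg n := G.add_mem (hf n) (hg n)
  zero_mem' _ := G.zero_mem
  smul_mem' c _ hf n := G.smul_mem c (hf n)

@[simp] lemma shiftOp_apply_zero (f : Hardy E) : shiftOp f 0 = 0 := rfl

@[simp] lemma shiftOp_apply_succ (f : Hardy E) (n : ℕ) : shiftOp f (n + 1) = f n := rfl

lemma shiftOp_zero : shiftOp (0 : Hardy E) = 0 := lp.ext (funext fun n => by cases n <;> rfl)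

lemma inclOp_eq_single (y : E) : inclOp y = lp.single 2 0 y := rfl

@[simp] lemma inclOp_apply_zero (y : E) : inclOp y 0 = y := lp.single_apply_self _ _ _

@[simp] lemma inclOp_apply_succ (y : E) (n : ℕ) : inclOp y (n + 1) = 0 :=
  lp.single_apply_ne _ _ _ n.succ_ne_zero

lemma shiftOp_single (y : E) (n : ℕ) :
    shiftOp (lp.single 2 n y : Hardy E) = lp.single 2 (n + 1) y := by
  ext (_ | m) <;> simp [Pi.single_apply]

section BrownianShift

variable (σ θ : ℝ)

@[simp] lemma BS_fst_apply_zero (v : Hardy E × E) : (BS σ θ v).1 0 = (σ : ℂ) • v.2 := by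
  simp only [BS, lp.coeFn_add, lp.coeFn_smul, Pi.add_apply, Pi.smul_apply, shiftOp_apply_zero,
    inclOp_apply_zero, zero_add]

@[simp] lemma BS_fst_apply_succ (v : Hardy E × E) (n : ℕ) : (BS σ θ v).1 (n + 1) = v.1 n := by
  simp only [BS, lp.coeFn_add, lp.coeFn_smul, Pi.add_apply, Pi.smul_apply, shiftOp_apply_succ,
    inclOp_apply_succ, smul_zero, add_zero]

@[simp] lemma BS_snd (v : Hardy E × E) : (BS σ θ v).2 = exp (θ * I) • v.2 := rfl

@[simp] lemma BSadj_fst_apply (v : Hardy E × E) (n : ℕ) : (BSadj σ θ v).1 n = v.1 (n + 1) := rfl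

@[simp] lemma BSadj_snd (v : Hardy E × E) :
    (BSadj σ θ v).2 = (σ : ℂ) • v.1 0 + exp (-(θ * I)) • v.2 := rfl

lemma BSadj_BS (v : Hardy E × E) : BSadj σ θ (BS σ θ v) = (v.1, ((σ : ℂ) ^ 2 + 1) • v.2) := by
  refine Prod.ext (lp.ext (funext fun n => ?_)) ?_
  · simp only [BSadj_fst_apply, BS_fst_apply_succ]
  · rw [BSadj_snd, BS_fst_apply_zero, BS_snd, smul_smul, smul_smul, ← exp_add, neg_add_cancel,
      exp_zero, ← add_smul, sq]

lemma BS_inl (f : Hardy E) : BS σ θ (f, 0) = (shiftOp f, 0) := by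
  simp only [BS, inclOp_eq_single, lp.single_zero, smul_zero, add_zero]

lemma BS_inr (y : E) : BS σ θ (0, y) = ((σ : ℂ) • inclOp y, exp (θ * I) • y) := by
  simp only [BS, shiftOp_zero, zero_add]

lemma BS_mem_prod_hardySubmodule {G : Submodule ℂ E} {v : Hardy E × E}
    (hv : v ∈ (hardySubmodule G).prod G) : BS σ θ v ∈ (hardySubmodule G).prod G := by
  obtain ⟨hf, hy⟩ := hv
  refine ⟨fun n => ?_, G.smul_mem _ hy⟩
  cases n with
  | zero => rw [BS_fst_apply_zero]; exact G.smul_mem _ hy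
  | succ n => rw [BS_fst_apply_succ]; exact hf n

lemma BSadj_mem_prod_hardySubmodule {G : Submodule ℂ E} {v : Hardy E × E}
    (hv : v ∈ (hardySubmodule G).prod G) : BSadj σ θ v ∈ (hardySubmodule G).prod G := by
  obtain ⟨hf, hy⟩ := hv
  exact ⟨fun n => hf (n + 1), G.add_mem (G.smul_mem _ (hf 0)) (G.smul_mem _ hy)⟩

end BrownianShift

section ReducingSubspace

variable {σ θ : ℝ} {M : Submodule ℂ (Hardy E × E)}

lemma snd_mem_comap_inr (hσ : σ ≠ 0) (hB : ∀ v ∈ M, BS σ θ v ∈ M)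
    (hBa : ∀ v ∈ M, BSadj σ θ v ∈ M) {v : Hardy E × E} (hv : v ∈ M) :
    v.2 ∈ M.comap (LinearMap.inr ℂ _ _) := by
  have hsub : BSadj σ θ (BS σ θ v) - v = LinearMap.inr ℂ _ _ ((σ : ℂ) ^ 2 • v.2) := by
    rw [BSadj_BS]
    exact Prod.ext (sub_self _) (by simp only [Prod.snd_sub, add_smul, one_smul,
      add_sub_cancel_right, LinearMap.inr_apply])
  have h : (σ : ℂ) ^ 2 • v.2 ∈ M.comap (LinearMap.inr ℂ _ _) := by
    rw [Submodule.mem_comap, ← hsub]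
    exact M.sub_mem (hBa _ (hB v hv)) hv
  exact (Submodule.smul_mem_iff _ (pow_ne_zero 2 (ofReal_ne_zero.2 hσ))).1 h

lemma fst_mem_comap_inl (hσ : σ ≠ 0) (hB : ∀ v ∈ M, BS σ θ v ∈ M)
    (hBa : ∀ v ∈ M, BSadj σ θ v ∈ M) {v : Hardy E × E} (hv : v ∈ M) :
    v.1 ∈ M.comap (LinearMap.inl ℂ _ _) := by
  have hsub : v - LinearMap.inr ℂ _ _ v.2 = LinearMap.inl ℂ _ _ v.1 :=
    Prod.ext (sub_zero _) (sub_self _)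
  rw [Submodule.mem_comap, ← hsub]
  exact M.sub_mem hv (snd_mem_comap_inr hσ hB hBa hv)

lemma eq_prod_comap_inl_comap_inr (hσ : σ ≠ 0) (hB : ∀ v ∈ M, BS σ θ v ∈ M)
    (hBa : ∀ v ∈ M, BSadj σ θ v ∈ M) :
    M = (M.comap (LinearMap.inl ℂ _ _)).prod (M.comap (LinearMap.inr ℂ _ _)) := by
  ext v
  refine ⟨fun hv => ⟨fst_mem_comap_inl hσ hB hBa hv, snd_mem_comap_inr hσ hB hBa hv⟩, ?_⟩
  rintro ⟨h1, h2⟩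
  simpa using M.add_mem h1 h2

lemma comap_inl_le_hardySubmodule (hσ : σ ≠ 0) (hB : ∀ v ∈ M, BS σ θ v ∈ M)
    (hBa : ∀ v ∈ M, BSadj σ θ v ∈ M) :
    M.comap (LinearMap.inl ℂ _ _) ≤ hardySubmodule (M.comap (LinearMap.inr ℂ _ _)) := by
  intro f hf n
  induction n generalizing f with
  | zero =>
    have h := snd_mem_comap_inr hσ hB hBa (hBa _ hf)
    simp only [LinearMap.inl_apply, BSadj_snd, smul_zero, add_zero] at h
    exact (Submodule.smul_mem_iff _ (ofReal_ne_zero.2 hσ)).1 h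
  | succ n ih => exact ih (fst_mem_comap_inl hσ hB hBa (hBa _ hf))

lemma single_mem_comap_inl (hσ : σ ≠ 0) (hB : ∀ v ∈ M, BS σ θ v ∈ M)
    (hBa : ∀ v ∈ M, BSadj σ θ v ∈ M) {y : E} (hy : y ∈ M.comap (LinearMap.inr ℂ _ _)) (n : ℕ) :
    lp.single 2 n y ∈ M.comap (LinearMap.inl ℂ _ _) := by
  induction n with
  | zero =>
    have h := fst_mem_comap_inl hσ hB hBa (hB _ hy)
    rw [LinearMap.inr_apply, BS_inr] at h
    exact (Submodule.smul_mem_iff _ (ofReal_ne_zero.2 hσ)).1 h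
  | succ n ih => simpa [BS_inl, shiftOp_single] using hB _ ih

lemma hardySubmodule_le_comap_inl (hσ : σ ≠ 0) (hB : ∀ v ∈ M, BS σ θ v ∈ M)
    (hBa : ∀ v ∈ M, BSadj σ θ v ∈ M) (hMc : IsClosed (M : Set (Hardy E × E))) :
    hardySubmodule (M.comap (LinearMap.inr ℂ _ _)) ≤ M.comap (LinearMap.inl ℂ _ _) :=
  fun _ hf => lp.mem_of_forall_single_mem (p := 2) (by norm_num)
    (hMc.preimage (Continuous.prodMk_left 0))
    fun n => single_mem_comap_inl hσ hB hBa (hf n) n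

lemma eq_prod_hardySubmodule (hσ : σ ≠ 0) (hB : ∀ v ∈ M, BS σ θ v ∈ M)
    (hBa : ∀ v ∈ M, BSadj σ θ v ∈ M) (hMc : IsClosed (M : Set (Hardy E × E))) :
    M = (hardySubmodule (M.comap (LinearMap.inr ℂ _ _))).prod (M.comap (LinearMap.inr ℂ _ _)) := by
  conv_lhs => rw [eq_prod_comap_inl_comap_inr hσ hB hBa]
  rw [(comap_inl_le_hardySubmodule hσ hB hBa).antisymm (hardySubmodule_le_comap_inl hσ hB hBa hMc)]

end ReducingSubspace

theorem reducing_subspaces_classification_general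
    (σ θ : ℝ) (hσ : 0 < σ)
    (M : Submodule ℂ (Hardy E × E)) (hMc : IsClosed (M : Set (Hardy E × E))) :
    ((∀ v ∈ M, BS σ θ v ∈ M) ∧ (∀ v ∈ M, BSadj σ θ v ∈ M)) ↔
      ∃ G : Submodule ℂ E, IsClosed (G : Set E) ∧
        (M : Set (Hardy E × E)) =
          {p : Hardy E × E | (∀ n : ℕ, (p.1 : ℕ → E) n ∈ G) ∧ p.2 ∈ G} := by
  constructor
  · rintro ⟨hB, hBa⟩
    exact ⟨M.comap (LinearMap.inr ℂ _ _), hMc.preimage (Continuous.prodMk_right 0),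
      congrArg SetLike.coe (eq_prod_hardySubmodule hσ.ne' hB hBa hMc)⟩
  · rintro ⟨G, -, hM⟩
    obtain rfl : M = (hardySubmodule G).prod G := SetLike.coe_injective hM
    exact ⟨fun _ => BS_mem_prod_hardySubmodule σ θ, fun _ => BSadj_mem_prod_hardySubmodule σ θ⟩

/-- Theorem 5.1: a closed subspace `M ⊆ H²_E(𝕋) ⊕ E` is reducing for the Brownian shift
`B^E_{σ,e^{iθ}}` iff `M = H²_G(𝕋) ⊕ G` for some closed subspace `G ⊆ E`, where
`H²_G(𝕋)` is the set of functions all of whose coefficients lie in `G`. -/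
theorem reducing_subspaces_classification
    (σ θ : ℝ) (hσ : 0 < σ) (hθ : θ ∈ Set.Ico 0 (2 * Real.pi))
    (M : Submodule ℂ (Hardy E × E)) (hMc : IsClosed (M : Set (Hardy E × E))) :
    ((∀ v ∈ M, BS σ θ v ∈ M) ∧ (∀ v ∈ M, BSadj σ θ v ∈ M)) ↔
      ∃ G : Submodule ℂ E, IsClosed (G : Set E) ∧
        (M : Set (Hardy E × E)) =
          {p : Hardy E × E | (∀ n : ℕ, (p.1 : ℕ → E) n ∈ G) ∧ p.2 ∈ G} :=
  reducing_subspaces_classification_general σ θ hσ M hMc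
end
end
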